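/- arXiv:2402.09623 — 7 statements merged into one kernel-verified Lean document; each statement's English description precedes it below -/
import Mathlib

section
/- Let ε_1, ..., ε_{n+1} be exchangeable real-valued random variables. Let Q̂ be the ⌈(1-α)(n+1)⌉-th smallest value among ε_1, ..., ε_n. Then P(ε_{n+1} ≤ Q̂) ≥ 1-α. -/
open MeasureTheory

open List
open scoped ENNReal

lemma sorted_count_lt {s : List ℝ} (hs : s.Pairwise (· ≤ ·)) (x : ℝ) (i : ℕ) (hi : i < s.length) :
    s[i] < x ↔ i < s.countP (fun y => decide (y < x)) := by
  constructor
  · intro h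
    have h1 : (s.take (i+1)).countP (fun y => decide (y < x)) = i + 1 := by
      have hlen : (s.take (i+1)).length = i + 1 := by
        simp [Nat.min_eq_left]; omega
      conv_rhs => rw [← hlen]
      rw [List.countP_eq_length]
      intro a ha
      simp only [decide_eq_true_eq]
      obtain ⟨j, hj, rfl⟩ := List.mem_iff_getElem.mp ha
      rw [List.getElem_take]
      have hjlen : j < i + 1 := by have := hj; simp at this; omega
      have hj' : j < s.length := by omega
      rcases lt_or_eq_of_le (Nat.lt_succ_iff.mp hjlen) with h' | h'
      · exact lt_of_le_of_lt ((List.pairwise_iff_getElem.mp hs) j i hj' hi h') h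
      · simpa [h'] using h
    calc i < i + 1 := Nat.lt_succ_self i
    _ = (s.take (i+1)).countP (fun y => decide (y < x)) := h1.symm
    _ ≤ s.countP _ := List.Sublist.countP_le (List.take_sublist _ _)
  · intro h
    by_contra hlt
    push_neg at hlt
    have hdrop : (s.drop i).countP (fun y => decide (y < x)) = 0 := by
      rw [List.countP_eq_zero]
      intro a ha
      simp only [decide_eq_true_eq, not_lt]
      obtain ⟨j, hj, rfl⟩ := List.mem_iff_getElem.mp ha
      rw [List.getElem_drop]
      have hj' : i + j < s.length := by
        have := hj; simp at this; omega
      rcases Nat.eq_zero_or_pos j with rfl | hj0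
      · simpa using hlt
      · exact le_trans hlt ((List.pairwise_iff_getElem.mp hs) i (i+j) hi hj' (by omega))
    have := List.take_append_drop i s
    have hcnt : s.countP (fun y => decide (y < x)) =
        (s.take i).countP (fun y => decide (y < x)) + (s.drop i).countP (fun y => decide (y < x)) := by
      conv_lhs => rw [← this]
      rw [List.countP_append]
    have hle : (s.take i).countP (fun y => decide (y < x)) ≤ i := by
      refine le_trans List.countP_le_length ?_
      simpa using Nat.le_of_lt hi
    omega

/-- The `k`-th smallest value (1-indexed) of a list of reals, as an extended real,
equal to `⊤` if `k` exceeds the length of the list. -/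
noncomputable def kthSmallestE (l : List ℝ) (k : ℕ) : EReal :=
  ((l.insertionSort (· ≤ ·)).map (fun x : ℝ => (x : EReal))).getD (k - 1) ⊤

lemma le_kthSmallestE_iff (l : List ℝ) (k : ℕ) (hk : 1 ≤ k) (x : ℝ) :
    (x : EReal) ≤ kthSmallestE l k ↔ l.countP (fun y => decide (y < x)) < k := by
  set s := l.insertionSort (· ≤ ·) with hs_def
  have hs : s.Pairwise (· ≤ ·) := List.pairwise_insertionSort _ _
  have hperm : s.Perm l := List.perm_insertionSort _ _
  have hcnt : l.countP (fun y => decide (y < x)) = s.countP (fun y => decide (y < x)) :=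
    (hperm.countP_eq _).symm
  rw [hcnt]
  unfold kthSmallestE
  rw [← hs_def]
  rcases lt_or_ge (k-1) s.length with hlen | hlen
  · have hlen' : k - 1 < (s.map (fun x : ℝ => (x : EReal))).length := by simpa using hlen
    rw [List.getD_eq_getElem _ _ hlen', List.getElem_map]
    rw [show ((x : EReal) ≤ (s[k-1] : EReal)) ↔ x ≤ s[k-1] from EReal.coe_le_coe_iff]
    constructor
    · intro h
      have h2 : ¬ (k - 1 < s.countP (fun y => decide (y < x))) := by
        rw [← sorted_count_lt hs x (k-1) hlen]; exact not_lt.mpr h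
      omega
    · intro h
      have h2 : ¬ (s[k-1] < x) := by
        rw [sorted_count_lt hs x (k-1) hlen]; omega
      exact not_lt.mp h2
  · have : (s.map (fun x : ℝ => (x : EReal))).length ≤ k - 1 := by simpa using hlen
    rw [List.getD_eq_default _ _ this]
    simp only [le_top, true_iff]
    have := List.countP_le_length (p := fun y => decide (y < x)) (l := s)
    omega

lemma rank_count_lower (N k : ℕ) (f : Fin N → ℝ) :
    min k N ≤ (Finset.univ.filter
      (fun j : Fin N => (Finset.univ.filter (fun i => f i < f j)).card < k)).card := by
  set σ := Tuple.sort f with hσ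
  have hmono : Monotone (f ∘ σ) := Tuple.monotone_sort f
  have key : ∀ p : Fin N, (p : ℕ) < k →
      (Finset.univ.filter (fun i => f i < f (σ p))).card < k := by
    intro p hp
    have h1 : (Finset.univ.filter (fun i => f i < f (σ p))).card ≤ (Finset.Iio p).card := by
      refine Finset.card_le_card_of_injOn (fun i => σ.symm i) ?_ ?_
      · intro i hi
        simp only [Finset.mem_coe, Finset.mem_filter, Finset.mem_univ, true_and] at hi
        simp only [Finset.mem_coe, Finset.mem_Iio]
        by_contra hle
        push_neg at hle
        have : f (σ p) ≤ f (σ (σ.symm i)) := hmono hle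
        rw [Equiv.apply_symm_apply] at this
        exact absurd hi (not_lt.mpr this)
      · intro a _ b _ hab
        exact σ.symm.injective hab
    rw [Fin.card_Iio] at h1
    omega
  have hinj : Set.InjOn (fun p : Fin (min k N) =>
      σ ⟨(p : ℕ), lt_of_lt_of_le p.isLt (min_le_right _ _)⟩) (Finset.univ : Finset (Fin (min k N))) := by
    intro a _ b _ hab
    have := σ.injective hab
    exact Fin.ext (by simpa [Fin.ext_iff] using this)
  have := Finset.card_le_card_of_injOn
    (f := fun p : Fin (min k N) => σ ⟨(p : ℕ), lt_of_lt_of_le p.isLt (min_le_right _ _)⟩)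
    (s := Finset.univ)
    (t := Finset.univ.filter
      (fun j : Fin N => (Finset.univ.filter (fun i => f i < f j)).card < k)) ?_ hinj
  · simpa using this
  · intro p _
    simp only [Finset.mem_coe, Finset.mem_filter, Finset.mem_univ, true_and]
    exact key _ (lt_of_lt_of_le p.isLt (min_le_left _ _))

lemma countP_ofFn_eq {m : ℕ} (g : Fin m → ℝ) (x : ℝ) :
    (List.ofFn g).countP (fun y => decide (y < x)) =
      (Finset.univ.filter (fun i => g i < x)).card := by
  induction m with
  | zero => simp
  | succ m ih =>
    rw [List.ofFn_succ, List.countP_cons, ih (fun i => (g i.succ))]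
    rw [Fin.card_filter_univ_succ' (fun i => g i < x)]
    by_cases h : g 0 < x <;> simp [h, add_comm]

lemma card_filter_castSucc {m : ℕ} (P : Fin (m+1) → Prop) [DecidablePred P]
    (hP : ¬ P (Fin.last m)) :
    (Finset.univ.filter P).card = (Finset.univ.filter (fun i : Fin m => P i.castSucc)).card := by
  rw [Fin.univ_castSuccEmb, Finset.filter_cons, if_neg hP, Finset.filter_map, Finset.card_map]
  rfl

theorem stmt0 {Ω : Type*} [MeasurableSpace Ω] (μ : Measure Ω) [IsProbabilityMeasure μ]
    (n : ℕ) (hn : 0 < n) (α : ℝ) (hα : α ∈ Set.Ioo (0 : ℝ) 1)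
    (ε : Ω → Fin (n + 1) → ℝ) (hmeas : Measurable ε)
    (hexch : ∀ σ : Equiv.Perm (Fin (n + 1)),
      Measure.map (fun ω i => ε ω (σ i)) μ = Measure.map ε μ) :
    ENNReal.ofReal (1 - α) ≤
      μ {ω | (ε ω (Fin.last n) : EReal) ≤
        kthSmallestE (List.ofFn (fun i : Fin n => ε ω i.castSucc)) ⌈(1 - α) * (n + 1)⌉₊} := by
  classical
  obtain ⟨hα0, hα1⟩ := hα
  set k := ⌈(1 - α) * ((n : ℝ) + 1)⌉₊ with hk_def
  have hk1 : 1 ≤ k := by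
    rw [hk_def]
    have : (0:ℝ) < (1 - α) * ((n : ℝ) + 1) := by
      have : (0:ℝ) < 1 - α := by linarith
      positivity
    exact Nat.ceil_pos.mpr this
  set B : Fin (n+1) → Set (Fin (n+1) → ℝ) :=
    fun j => {f | (Finset.univ.filter (fun i => f i < f j)).card < k} with hB
  have hBmeas : ∀ j, MeasurableSet (B j) := by
    intro j
    have hc : Measurable (fun f : Fin (n+1) → ℝ =>
        (Finset.univ.filter (fun i => f i < f j)).card) := by
      simp only [Finset.card_filter]
      exact Finset.measurable_sum _ (fun i _ =>
        Measurable.ite (measurableSet_lt (measurable_pi_apply i) (measurable_pi_apply j))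
          measurable_const measurable_const)
    exact hc (MeasurableSet.of_discrete (s := Set.Iio k))
  have hAmeas : ∀ j, MeasurableSet (ε ⁻¹' B j) := fun j => hmeas (hBmeas j)
  have hmeas' : ∀ σ : Equiv.Perm (Fin (n+1)), Measurable (fun ω i => ε ω (σ i)) :=
    fun σ => measurable_pi_lambda _ (fun i => (measurable_pi_apply (σ i)).comp hmeas)
  have hcard_perm : ∀ (σ : Equiv.Perm (Fin (n+1))) (f : Fin (n+1) → ℝ) (c : ℝ),
      (Finset.univ.filter (fun i => f (σ i) < c)).card
        = (Finset.univ.filter (fun i => f i < c)).card := by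
    intro σ f c
    refine Finset.card_bij (fun i _ => σ i) ?_ ?_ ?_
    · intro a ha
      simp only [Finset.mem_filter, Finset.mem_univ, true_and] at ha ⊢
      exact ha
    · intro a _ b _ hab
      exact σ.injective hab
    · intro b hb
      refine ⟨σ.symm b, ?_, Equiv.apply_symm_apply _ _⟩
      simp only [Finset.mem_filter, Finset.mem_univ, true_and, Equiv.apply_symm_apply] at hb ⊢
      exact hb
  have hμeq : ∀ j, μ (ε ⁻¹' B j) = μ (ε ⁻¹' B (Fin.last n)) := by
    intro j
    set σ := Equiv.swap j (Fin.last n) with hσ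
    have hpre : (fun ω i => ε ω (σ i)) ⁻¹' B (Fin.last n) = ε ⁻¹' B j := by
      ext ω
      simp only [Set.mem_preimage, hB, Set.mem_setOf_eq]
      rw [hcard_perm σ (ε ω) (ε ω (σ (Fin.last n)))]
      rw [hσ, Equiv.swap_apply_right]
    calc μ (ε ⁻¹' B j) = μ ((fun ω i => ε ω (σ i)) ⁻¹' B (Fin.last n)) := by rw [hpre]
    _ = (Measure.map (fun ω i => ε ω (σ i)) μ) (B (Fin.last n)) :=
        (Measure.map_apply (hmeas' σ) (hBmeas _)).symm
    _ = (Measure.map ε μ) (B (Fin.last n)) := by rw [hexch σ]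
    _ = μ (ε ⁻¹' B (Fin.last n)) := Measure.map_apply hmeas (hBmeas _)
  have hsum_eq : ∑ j : Fin (n+1), μ (ε ⁻¹' B j)
      = ((n+1 : ℕ) : ℝ≥0∞) * μ (ε ⁻¹' B (Fin.last n)) := by
    rw [Finset.sum_congr rfl (fun j _ => hμeq j), Finset.sum_const, Finset.card_univ,
      Fintype.card_fin, nsmul_eq_mul]
  have hlow : ((min k (n+1) : ℕ) : ℝ≥0∞) ≤ ∑ j : Fin (n+1), μ (ε ⁻¹' B j) := by
    have h1 : ∀ j : Fin (n+1), μ (ε ⁻¹' B j)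
        = ∫⁻ ω, (ε ⁻¹' B j).indicator (fun _ => (1:ℝ≥0∞)) ω ∂μ :=
      fun j => (lintegral_indicator_one (hAmeas j)).symm
    simp_rw [h1]
    rw [← lintegral_finset_sum (μ := μ) Finset.univ
      (f := fun (j : Fin (n+1)) (ω : Ω) => (ε ⁻¹' B j).indicator (fun _ => (1:ℝ≥0∞)) ω)
      (fun j _ => Measurable.indicator measurable_const (hAmeas j))]
    have h2 : ∀ ω, ((min k (n+1) : ℕ) : ℝ≥0∞)
        ≤ ∑ j : Fin (n+1), (ε ⁻¹' B j).indicator (fun _ => (1:ℝ≥0∞)) ω := by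
      intro ω
      have h3 : ∑ j : Fin (n+1), (ε ⁻¹' B j).indicator (fun _ => (1:ℝ≥0∞)) ω
          = ((Finset.univ.filter (fun j : Fin (n+1) => ω ∈ ε ⁻¹' B j)).card : ℝ≥0∞) := by
        rw [Finset.card_filter]
        push_cast
        refine Finset.sum_congr rfl (fun j _ => ?_)
        by_cases h : ω ∈ ε ⁻¹' B j <;> simp [Set.indicator_apply, h]
      rw [h3]
      have h4 := rank_count_lower (n+1) k (ε ω)
      have h5 : (Finset.univ.filter (fun j : Fin (n+1) => ω ∈ ε ⁻¹' B j)).card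
          = (Finset.univ.filter (fun j : Fin (n+1) =>
              (Finset.univ.filter (fun i => ε ω i < ε ω j)).card < k)).card := by
        apply Finset.card_bij (fun a _ => a) <;> simp [hB]
      rw [h5]
      exact_mod_cast h4
    have := lintegral_mono (μ := μ) h2
    rwa [lintegral_const, measure_univ, mul_one] at this
  have hNA : ((min k (n+1) : ℕ) : ℝ≥0∞) ≤ ((n+1 : ℕ) : ℝ≥0∞) * μ (ε ⁻¹' B (Fin.last n)) := by
    rw [← hsum_eq]; exact hlow
  have hset : {ω | (ε ω (Fin.last n) : EReal) ≤
        kthSmallestE (List.ofFn (fun i : Fin n => ε ω i.castSucc)) ⌈(1 - α) * (n + 1)⌉₊}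
      = ε ⁻¹' B (Fin.last n) := by
    ext ω
    simp only [Set.mem_setOf_eq, Set.mem_preimage, hB]
    rw [show ⌈(1 - α) * ((n:ℝ) + 1)⌉₊ = k from rfl]
    rw [le_kthSmallestE_iff _ k hk1, countP_ofFn_eq]
    rw [card_filter_castSucc (fun i : Fin (n+1) => ε ω i < ε ω (Fin.last n)) (by simp)]
  rw [hset]
  have hmin : (1 - α) * ((n : ℝ) + 1) ≤ ((min k (n+1) : ℕ) : ℝ) := by
    rcases min_choice k (n+1) with h | h <;> rw [h]
    · exact Nat.le_ceil _
    · push_cast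
      nlinarith [Nat.cast_nonneg (α := ℝ) n]
  have step1 : ENNReal.ofReal (1 - α) * ((n+1 : ℕ) : ℝ≥0∞) ≤ ((min k (n+1) : ℕ) : ℝ≥0∞) := by
    calc ENNReal.ofReal (1 - α) * ((n+1 : ℕ) : ℝ≥0∞)
        = ENNReal.ofReal ((1 - α) * ((n : ℝ) + 1)) := by
          rw [ENNReal.ofReal_mul (by linarith)]
          congr 1
          rw [show ((n:ℝ) + 1) = ((n+1 : ℕ) : ℝ) by push_cast; ring]
          exact (ENNReal.ofReal_natCast _).symm
    _ ≤ ENNReal.ofReal ((min k (n+1) : ℕ) : ℝ) := ENNReal.ofReal_le_ofReal hmin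
    _ = ((min k (n+1) : ℕ) : ℝ≥0∞) := ENNReal.ofReal_natCast _
  have step2 : ENNReal.ofReal (1 - α) * ((n+1 : ℕ) : ℝ≥0∞)
      ≤ μ (ε ⁻¹' B (Fin.last n)) * ((n+1 : ℕ) : ℝ≥0∞) := by
    refine le_trans (le_trans step1 hNA) ?_
    rw [mul_comm]
  exact (ENNReal.mul_le_mul_iff_left (by exact_mod_cast Nat.succ_ne_zero n)
    (ENNReal.natCast_ne_top _)).mp step2
end

section
/- Let ε_1, ..., ε_{n+1} be exchangeable continuous random variables (almost surely distinct). Let Q̂ be the ⌈(1-α)(n+1)⌉-th smallest value among ε_1, ..., ε_n, assumed finite (i.e., ⌈(1-α)(n+1)⌉ ≤ n). Then P(ε_{n+1} ≤ Q̂) ≤ 1-α + 1/(n+1). -/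
open MeasureTheory
open scoped ENNReal

/-- The `k`-th smallest value (1-indexed) of a list of reals (default `0` if out of range). -/
noncomputable def kthSmallest (l : List ℝ) (k : ℕ) : ℝ :=
  (l.insertionSort (· ≤ ·)).getD (k - 1) 0

private lemma countP_ofFn_eq_s1 {m : ℕ} (f : Fin m → ℝ) (p : ℝ → Bool) :
    (List.ofFn f).countP p = ∑ j : Fin m, if p (f j) then 1 else 0 := by
  induction m with
  | zero => simp
  | succ m ih =>
    rw [List.ofFn_succ, List.countP_cons, Fin.sum_univ_succ, ih (fun j => f j.succ)]
    by_cases h : p (f 0) <;> simp [h, Nat.add_comm]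

private lemma countP_sorted_le (s : List ℝ) (hs : s.Pairwise (· ≤ ·)) (m : ℕ)
    (hm : m < s.length) :
    s.countP (fun x => decide (x < s.get ⟨m, hm⟩)) ≤ m := by
  set q := s.get ⟨m, hm⟩ with hq
  have hsplit : s.countP (fun x => decide (x < q)) =
      (s.take m).countP (fun x => decide (x < q)) +
      (s.drop m).countP (fun x => decide (x < q)) := by
    conv_lhs => rw [← List.take_append_drop m s, List.countP_append]
  have hdrop : (s.drop m).countP (fun x => decide (x < q)) = 0 := by
    rw [List.countP_eq_zero]
    intro a ha
    obtain ⟨i, hi, rfl⟩ := List.getElem_of_mem ha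
    have hlen : m + i < s.length := by
      rw [List.length_drop] at hi
      omega
    have h2 : q ≤ s[m + i] := by
      simpa [hq] using hs.rel_get_of_le (a := ⟨m, hm⟩) (b := ⟨m + i, hlen⟩) (by simp)
    have h1 : (s.drop m)[i] = s[m + i] := by
      rw [List.getElem_drop]
    rw [h1]
    simp [not_lt.mpr h2]
  have htake : (s.take m).countP (fun x => decide (x < q)) ≤ m :=
    le_trans List.countP_le_length (by rw [List.length_take]; omega)
  omega

theorem stmt1 {Ω : Type*} [MeasurableSpace Ω] (μ : Measure Ω) [IsProbabilityMeasure μ]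
    (n : ℕ) (hn : 0 < n) (α : ℝ) (hα : α ∈ Set.Ioo (0 : ℝ) 1)
    (hk : ⌈(1 - α) * (n + 1)⌉₊ ≤ n)
    (ε : Ω → Fin (n + 1) → ℝ) (hmeas : Measurable ε)
    (hexch : ∀ σ : Equiv.Perm (Fin (n + 1)),
      Measure.map (fun ω i => ε ω (σ i)) μ = Measure.map ε μ)
    (hdistinct : μ {ω | ∃ i j : Fin (n + 1), i ≠ j ∧ ε ω i = ε ω j} = 0) :
    μ {ω | ε ω (Fin.last n) ≤
        kthSmallest (List.ofFn (fun i : Fin n => ε ω i.castSucc)) ⌈(1 - α) * (n + 1)⌉₊}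
      ≤ ENNReal.ofReal (1 - α + 1 / (n + 1)) := by
  classical
  obtain ⟨hα0, hα1⟩ := hα
  set k := ⌈(1 - α) * (n + 1)⌉₊ with hkdef
  have hk1 : 1 ≤ k := by
    have hpos : (0:ℝ) < (1 - α) * (n + 1) := by
      apply mul_pos (by linarith)
      positivity
    exact Nat.one_le_iff_ne_zero.mpr (Nat.ceil_pos.mpr hpos).ne'
  -- rank function
  set R : (Fin (n+1) → ℝ) → Fin (n+1) → ℕ :=
    fun x i => (Finset.univ.filter fun j => x j < x i).card with hR
  have hRmeas : ∀ i, Measurable fun x => R x i := by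
    intro i
    simp only [hR, Finset.card_filter]
    exact Finset.measurable_sum _ fun j _ =>
      Measurable.ite (measurableSet_lt (measurable_pi_apply j) (measurable_pi_apply i))
        measurable_const measurable_const
  set A : Fin (n+1) → Set Ω := fun i => {ω | R (ε ω) i < k} with hA
  have hTmeas : ∀ i, MeasurableSet {x : Fin (n+1) → ℝ | R x i < k} :=
    fun i => (hRmeas i) measurableSet_Iio
  have hAmeas : ∀ i, MeasurableSet (A i) := fun i => hmeas (hTmeas i)
  -- all A i have the same measure
  have hAeq : ∀ i, μ (A i) = μ (A (Fin.last n)) := by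
    intro i
    set σ := Equiv.swap i (Fin.last n) with hσdef
    have hσ := hexch σ
    have hcomp : Measurable fun ω j => ε ω (σ j) :=
      measurable_pi_lambda _ fun j => (measurable_pi_apply (σ j)).comp hmeas
    have h1 : μ (A i) = Measure.map ε μ {x | R x i < k} := by
      rw [Measure.map_apply hmeas (hTmeas i)]; rfl
    rw [h1, ← hσ, Measure.map_apply hcomp (hTmeas i)]
    congr 1
    ext ω
    simp only [Set.mem_setOf_eq, Set.mem_preimage, hA, hR]
    have hσi : σ i = Fin.last n := Equiv.swap_apply_left _ _
    have hcard : (Finset.univ.filter fun j => ε ω (σ j) < ε ω (σ i)).card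
        = (Finset.univ.filter fun j => ε ω j < ε ω (Fin.last n)).card := by
      rw [hσi, Finset.card_filter, Finset.card_filter]
      exact Equiv.sum_comp σ (fun j => if ε ω j < ε ω (Fin.last n) then 1 else 0)
    rw [hcard]
  -- a.e. count bound
  have hcount : ∀ᵐ ω ∂μ, ((Finset.univ.filter fun i => ω ∈ A i).card : ℝ≥0∞) ≤ k := by
    have hae : ∀ᵐ ω ∂μ, ∀ i j : Fin (n+1), i ≠ j → ε ω i ≠ ε ω j := by
      rw [ae_iff]
      convert hdistinct using 2
      ext ω
      push_neg
      simp
    filter_upwards [hae] with ω hω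
    have hmono : ∀ a b : Fin (n+1), ε ω a < ε ω b → R (ε ω) a < R (ε ω) b := by
      intro a b hab
      apply Finset.card_lt_card
      rw [Finset.ssubset_iff_of_subset]
      · exact ⟨a, by simp [hab], by simp⟩
      · intro x hx
        simp only [Finset.mem_filter, Finset.mem_univ, true_and] at hx ⊢
        exact hx.trans hab
    have hinj : Function.Injective (R (ε ω)) := by
      intro a b hab
      by_contra hne
      rcases lt_trichotomy (ε ω a) (ε ω b) with h | h | h
      · exact absurd hab (hmono a b h).ne
      · exact hω a b hne h
      · exact absurd hab.symm (hmono b a h).ne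
    have hcard : (Finset.univ.filter fun i => ω ∈ A i).card ≤ (Finset.range k).card := by
      apply Finset.card_le_card_of_injOn (R (ε ω))
      · intro a ha
        simp only [Finset.mem_coe, Finset.mem_filter] at ha
        simpa [Finset.mem_range, hA] using ha.2
      · exact hinj.injOn
    rw [Finset.card_range] at hcard
    exact_mod_cast hcard
  -- sum of measures bound
  have hsum : ∑ i : Fin (n+1), μ (A i) ≤ k := by
    have heq : ∑ i : Fin (n+1), μ (A i)
        = ∫⁻ ω, ((Finset.univ.filter fun i => ω ∈ A i).card : ℝ≥0∞) ∂μ := by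
      calc ∑ i : Fin (n+1), μ (A i)
          = ∑ i : Fin (n+1), ∫⁻ ω, (A i).indicator (1 : Ω → ℝ≥0∞) ω ∂μ := by
            refine Finset.sum_congr rfl fun i _ => ?_
            exact (lintegral_indicator_one (hAmeas i)).symm
        _ = ∫⁻ ω, ∑ i : Fin (n+1), (A i).indicator (1 : Ω → ℝ≥0∞) ω ∂μ :=
            (lintegral_finset_sum _ fun i _ => (measurable_one.indicator (hAmeas i))).symm
        _ = _ := by
            congr 1
            ext ω
            rw [Finset.card_filter]
            push_cast
            refine Finset.sum_congr rfl fun i _ => ?_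
            simp [Set.indicator_apply]
    rw [heq]
    calc ∫⁻ ω, ((Finset.univ.filter fun i => ω ∈ A i).card : ℝ≥0∞) ∂μ
        ≤ ∫⁻ _, (k:ℝ≥0∞) ∂μ := lintegral_mono_ae hcount
      _ = k := by simp
  have hlast : ((n:ℝ≥0∞)+1) * μ (A (Fin.last n)) ≤ k := by
    have : ∑ i : Fin (n+1), μ (A i) = ((n:ℝ≥0∞)+1) * μ (A (Fin.last n)) := by
      rw [Finset.sum_congr rfl fun i _ => hAeq i, Finset.sum_const, Finset.card_univ,
        Fintype.card_fin, nsmul_eq_mul]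
      push_cast
      ring
    rw [← this]
    exact hsum
  -- event is contained in A (Fin.last n)
  have hsubset : {ω | ε ω (Fin.last n) ≤
      kthSmallest (List.ofFn (fun i : Fin n => ε ω i.castSucc)) k} ⊆ A (Fin.last n) := by
    intro ω hω
    simp only [Set.mem_setOf_eq] at hω
    set L := List.ofFn (fun i : Fin n => ε ω i.castSucc) with hL
    set s := L.insertionSort (· ≤ ·) with hs
    have hlen : s.length = n := by
      rw [hs, (List.perm_insertionSort _ L).length_eq, hL, List.length_ofFn]
    have hkm : k - 1 < s.length := by omega
    have hqv : kthSmallest L k = s.get ⟨k-1, hkm⟩ := by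
      rw [kthSmallest, ← hs, List.getD_eq_getElem _ _ hkm]; rfl
    set q := s.get ⟨k-1, hkm⟩ with hqdef
    show R (ε ω) (Fin.last n) < k
    have hcast : R (ε ω) (Fin.last n)
        = ∑ j : Fin n, if ε ω j.castSucc < ε ω (Fin.last n) then 1 else 0 := by
      show (Finset.univ.filter fun j : Fin (n+1) => ε ω j < ε ω (Fin.last n)).card = _
      rw [Finset.card_filter, Fin.sum_univ_castSucc]
      simp
    have hmono : (∑ j : Fin n, if ε ω j.castSucc < ε ω (Fin.last n) then 1 else 0)
        ≤ ∑ j : Fin n, if ε ω j.castSucc < q then 1 else 0 := by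
      apply Finset.sum_le_sum
      intro j _
      have hle : ε ω (Fin.last n) ≤ q := hqv ▸ hω
      by_cases h1 : ε ω j.castSucc < ε ω (Fin.last n)
      · simp [h1, lt_of_lt_of_le h1 hle]
      · simp [h1]
    have hcount2 : (∑ j : Fin n, if ε ω j.castSucc < q then 1 else 0)
        = L.countP (fun x => decide (x < q)) := by
      rw [hL, countP_ofFn_eq_s1]
      simp
    have hperm : L.countP (fun x => decide (x < q))
        = s.countP (fun x => decide (x < q)) :=
      ((List.perm_insertionSort _ L).countP_eq _).symm
    have hbound := countP_sorted_le s (List.pairwise_insertionSort _ L) (k-1) hkm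
    rw [← hqdef] at hbound
    omega
  -- conclude
  have hfinal : μ (A (Fin.last n)) ≤ (k : ℝ≥0∞) / ((n:ℝ≥0∞)+1) := by
    rw [ENNReal.le_div_iff_mul_le (Or.inl (by norm_num)) (Or.inl (by norm_num))]
    rw [mul_comm]
    exact hlast
  refine le_trans (measure_mono hsubset) (le_trans hfinal ?_)
  have hnp : (0:ℝ) < (n:ℝ) + 1 := by positivity
  have hcast : (k : ℝ≥0∞) / ((n:ℝ≥0∞)+1) = ENNReal.ofReal ((k:ℝ) / ((n:ℝ)+1)) := by
    rw [ENNReal.ofReal_div_of_pos hnp]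
    congr 1
    · exact (ENNReal.ofReal_natCast k).symm
    · rw [ENNReal.ofReal_add (Nat.cast_nonneg n) zero_le_one, ENNReal.ofReal_natCast,
        ENNReal.ofReal_one]
  rw [hcast]
  apply ENNReal.ofReal_le_ofReal
  have hceil : (k:ℝ) < (1 - α) * (n + 1) + 1 :=
    Nat.ceil_lt_add_one (mul_nonneg (by linarith) (by positivity))
  rw [div_le_iff₀ hnp]
  have hfe : (1 - α + 1 / ((n:ℝ) + 1)) * ((n:ℝ) + 1) = (1 - α) * ((n:ℝ) + 1) + 1 := by
    field_simp
  rw [hfe]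
  linarith
end

section
/- (Simultaneous coverage of CAFHT with multiplicative scores.) Under the same setup as the additive case, define instead ε̃_i = max_{t∈[T]} max( [ℓ_t(Y^(i)) - Y_t^(i)]_+ / w_t(Y^(i)), [Y_t^(i) - u_t(Y^(i))]_+ / w_t(Y^(i)) ), where w_t(Y^(i)) = u_t(Y^(i)) - ℓ_t(Y^(i)) > 0 is the interval width. Let Q̃ be the ⌈(1-α)(n+1)⌉-th smallest of ε̃_1,...,ε̃_n. Then P( for all t ∈ [T], Y_t^(n+1) ∈ [ℓ_t(Y^(n+1)) - Q̃·w_t(Y^(n+1)), u_t(Y^(n+1)) + Q̃·w_t(Y^(n+1))] ) ≥ 1-α. -/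
open MeasureTheory

/-- The multiplicative CAFHT conformity score of a trajectory `y = (y_0, ..., y_T)`:
`max_{t ∈ [T]} max([ℓ_t(y) - y_t]_+ / w_t(y), [y_t - u_t(y)]_+ / w_t(y))`, where the
interval for time `t+1` (for `t : Fin T`) is `[L y t, U y t]` with width
`w_t(y) = U y t - L y t`. -/
noncomputable def mulScore {T : ℕ} (hT : 0 < T)
    (L U : (Fin (T + 1) → ℝ) → Fin T → ℝ) (y : Fin (T + 1) → ℝ) : ℝ :=
  Finset.univ.sup' (Finset.univ_nonempty_iff.mpr ⟨⟨0, hT⟩⟩)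
    (fun t : Fin T =>
      max (max (L y t - y t.succ) 0 / (U y t - L y t))
          (max (y t.succ - U y t) 0 / (U y t - L y t)))

lemma countP_ofFn {m : ℕ} (f : Fin m → ℝ) (p : ℝ → Prop) [DecidablePred p] :
    (List.ofFn f).countP (fun a => decide (p a)) =
      (Finset.univ.filter (fun i => p (f i))).card := by
  induction m with
  | zero => simp
  | succ m ih =>
    rw [List.ofFn_succ, List.countP_cons, Finset.card_filter, Fin.sum_univ_succ,
      ← Finset.card_filter, ih]
    simp [add_comm]

lemma sorted_countP_lt (ls : List ℝ) (hs : ls.Pairwise (· ≤ ·)) (m : ℕ) (hm : m < ls.length) :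
    ls.countP (fun a => decide (a < ls[m])) ≤ m := by
  have key : ∀ p : ℝ → Bool, ls.countP p = (ls.take m).countP p + (ls.drop m).countP p := by
    intro p
    conv_lhs => rw [show ls.countP p = ((ls.take m) ++ (ls.drop m)).countP p by
      rw [List.take_append_drop]]
    rw [List.countP_append]
  rw [key]
  have h1 : (ls.take m).countP (fun a => decide (a < ls[m])) ≤ m := by
    calc (ls.take m).countP _ ≤ (ls.take m).length := List.countP_le_length
      _ ≤ m := by simp [List.length_take]
  have h2 : (ls.drop m).countP (fun a => decide (a < ls[m])) = 0 := by
    rw [List.countP_eq_zero]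
    intro a ha
    rw [List.mem_iff_getElem] at ha
    obtain ⟨i, hi, rfl⟩ := ha
    rw [List.getElem_drop]
    simp only [decide_eq_true_eq, not_lt]
    rcases Nat.eq_or_lt_of_le (Nat.le_add_right m i) with h' | h'
    · exact le_of_eq (by congr 1)
    · exact (List.pairwise_iff_getElem.mp hs) m (m + i) hm (by
        have := (List.length_drop (i := m) (l := ls)) ▸ hi; omega) h'
  omega

lemma sorted_countP_le (ls : List ℝ) (hs : ls.Pairwise (· ≤ ·)) (m : ℕ) (hm : m < ls.length) :
    m + 1 ≤ ls.countP (fun a => decide (a ≤ ls[m])) := by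
  have key : ∀ p : ℝ → Bool,
      ls.countP p = (ls.take (m+1)).countP p + (ls.drop (m+1)).countP p := by
    intro p
    conv_lhs => rw [show ls.countP p = ((ls.take (m+1)) ++ (ls.drop (m+1))).countP p by
      rw [List.take_append_drop]]
    rw [List.countP_append]
  have hall : (ls.take (m + 1)).countP (fun a => decide (a ≤ ls[m])) = m + 1 := by
    have hlen : (ls.take (m+1)).length = m + 1 := by
      rw [List.length_take]; omega
    have : (ls.take (m+1)).countP (fun a => decide (a ≤ ls[m])) = (ls.take (m+1)).length := by
      rw [List.countP_eq_length]
      intro a ha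
      rw [List.mem_iff_getElem] at ha
      obtain ⟨i, hi, rfl⟩ := ha
      rw [List.getElem_take]
      simp only [decide_eq_true_eq]
      have hi' : i < m + 1 := hlen ▸ hi
      rcases Nat.eq_or_lt_of_le (Nat.lt_succ_iff.mp hi') with h' | h'
      · exact le_of_eq (by congr 1)
      · exact (List.pairwise_iff_getElem.mp hs) i m (lt_trans h' hm) hm h'
    rw [this, hlen]
  rw [key]
  omega

lemma kth_le_iff (l : List ℝ) (k : ℕ) (hk : 1 ≤ k) (x : ℝ) :
    (x : EReal) ≤ kthSmallestE l k ↔ l.countP (fun a => decide (a < x)) < k := by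
  set ls := l.insertionSort (· ≤ ·) with hls
  have hperm : ls.Perm l := List.perm_insertionSort _ l
  have hsort : ls.Pairwise (· ≤ ·) := List.pairwise_insertionSort _ l
  have hcnt : ∀ p : ℝ → Bool, l.countP p = ls.countP p := fun p => (hperm.countP_eq p).symm
  rw [hcnt]
  by_cases hlen : k - 1 < ls.length
  · have : kthSmallestE l k = ((ls[k-1] : ℝ) : EReal) := by
      rw [kthSmallestE, ← hls, List.getD_eq_getElem _ _ (by simpa using hlen),
        List.getElem_map]
    rw [this, EReal.coe_le_coe_iff]
    constructor
    · intro h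
      calc ls.countP (fun a => decide (a < x))
          ≤ ls.countP (fun a => decide (a < ls[k-1])) := by
            apply List.countP_mono_left
            intro a _ ha
            simp only [decide_eq_true_eq] at *
            exact lt_of_lt_of_le ha h
        _ ≤ k - 1 := sorted_countP_lt ls hsort _ hlen
        _ < k := by omega
    · intro h
      by_contra hlt
      push_neg at hlt
      have : k ≤ ls.countP (fun a => decide (a < x)) := by
        calc k = (k-1) + 1 := by omega
          _ ≤ ls.countP (fun a => decide (a ≤ ls[k-1])) := sorted_countP_le ls hsort _ hlen
          _ ≤ ls.countP (fun a => decide (a < x)) := by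
            apply List.countP_mono_left
            intro a _ ha
            simp only [decide_eq_true_eq] at *
            exact lt_of_le_of_lt ha hlt
      omega
  · have : kthSmallestE l k = ⊤ := by
      rw [kthSmallestE, ← hls, List.getD_eq_default]
      simpa using le_of_not_gt hlen
    rw [this]
    simp only [le_top, true_iff]
    have := List.countP_le_length (l := ls) (p := fun a => decide (a < x))
    omega

lemma kth_mem (l : List ℝ) (k : ℕ) :
    kthSmallestE l k = ⊤ ∨ ∃ y ∈ l, kthSmallestE l k = (y : EReal) := by
  set ls := l.insertionSort (· ≤ ·) with hls
  have hperm : ls.Perm l := List.perm_insertionSort _ l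
  by_cases hlen : k - 1 < ls.length
  · right
    refine ⟨ls[k-1], hperm.mem_iff.mp (List.getElem_mem _), ?_⟩
    rw [kthSmallestE, ← hls, List.getD_eq_getElem _ _ (by simpa using hlen), List.getElem_map]
  · left
    rw [kthSmallestE, ← hls, List.getD_eq_default]
    simpa using le_of_not_gt hlen

variable {T : ℕ} (hT : 0 < T) (L U : (Fin (T + 1) → ℝ) → Fin T → ℝ)

lemma mulScore_nonneg (y : Fin (T + 1) → ℝ) (hw : ∀ t, L y t < U y t) :
    0 ≤ mulScore hT L U y := by
  refine le_trans ?_ (Finset.le_sup' _ (Finset.mem_univ ⟨0, hT⟩))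
  have h : (0:ℝ) < U y ⟨0, hT⟩ - L y ⟨0, hT⟩ := by linarith [hw ⟨0, hT⟩]
  exact le_trans (div_nonneg (le_max_right _ _) h.le) (le_max_left _ _)

lemma mulScore_le_iff (y : Fin (T + 1) → ℝ) (hw : ∀ t, L y t < U y t) (q : ℝ) (hq : 0 ≤ q) :
    mulScore hT L U y ≤ q ↔
      ∀ t : Fin T, L y t - q * (U y t - L y t) ≤ y t.succ ∧
        y t.succ ≤ U y t + q * (U y t - L y t) := by
  rw [mulScore, Finset.sup'_le_iff]
  simp only [Finset.mem_univ, true_implies]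
  apply forall_congr'
  intro t
  have hw' : (0:ℝ) < U y t - L y t := by linarith [hw t]
  constructor
  · intro h
    rw [max_le_iff, div_le_iff₀ hw', div_le_iff₀ hw', max_le_iff, max_le_iff] at h
    constructor <;> nlinarith [h.1.1, h.2.1]
  · intro h
    rw [max_le_iff, div_le_iff₀ hw', div_le_iff₀ hw', max_le_iff, max_le_iff]
    refine ⟨⟨by nlinarith [h.1], by positivity⟩, ⟨by nlinarith [h.2], by positivity⟩⟩

lemma mulScore_measurable (hL : Measurable L) (hU : Measurable U) :
    Measurable (mulScore hT L U) := by
  have : mulScore hT L U = Finset.univ.sup' (Finset.univ_nonempty_iff.mpr ⟨⟨0, hT⟩⟩)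
      (fun (t : Fin T) (y : Fin (T+1) → ℝ) =>
        max (max (L y t - y t.succ) 0 / (U y t - L y t))
            (max (y t.succ - U y t) 0 / (U y t - L y t))) := by
    funext y
    rw [Finset.sup'_apply]
    rfl
  rw [this]
  apply Finset.measurable_sup'
  intro t _
  have hLt : Measurable fun y => L y t := (measurable_pi_apply t).comp hL
  have hUt : Measurable fun y => U y t := (measurable_pi_apply t).comp hU
  have hyt : Measurable fun y : Fin (T+1) → ℝ => y t.succ := measurable_pi_apply _
  exact ((((hLt.sub hyt).max measurable_const).div (hUt.sub hLt)).max
    (((hyt.sub hUt).max measurable_const).div (hUt.sub hLt)))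

lemma rank_comb {N k : ℕ} (hk1 : 1 ≤ k) (hkN : k ≤ N) (v : Fin N → ℝ) :
    k ≤ (Finset.univ.filter (fun j : Fin N =>
      (Finset.univ.filter (fun i : Fin N => v i < v j)).card < k)).card := by
  set ls := (List.ofFn v).insertionSort (· ≤ ·) with hls
  have hperm : ls.Perm (List.ofFn v) := List.perm_insertionSort _ _
  have hsort : ls.Pairwise (· ≤ ·) := List.pairwise_insertionSort _ _
  have hlen : ls.length = N := by rw [hls, List.length_insertionSort, List.length_ofFn]
  have hc1 : ∀ y : ℝ, (Finset.univ.filter (fun i : Fin N => v i < y)).card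
      = ls.countP (fun a => decide (a < y)) := by
    intro y
    rw [← countP_ofFn v (fun a => a < y), hperm.countP_eq]
  have hc2 : ∀ y : ℝ, (Finset.univ.filter (fun i : Fin N => v i ≤ y)).card
      = ls.countP (fun a => decide (a ≤ y)) := by
    intro y
    rw [← countP_ofFn v (fun a => a ≤ y), hperm.countP_eq]
  have hklen : k - 1 < ls.length := by omega
  set x := ls[k-1] with hx
  have sub1 : ∀ j : Fin N, v j ≤ x →
      (Finset.univ.filter (fun i : Fin N => v i < v j)).card < k := by
    intro j hj
    rw [hc1]
    calc ls.countP (fun a => decide (a < v j))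
        ≤ ls.countP (fun a => decide (a < x)) := by
          apply List.countP_mono_left
          intro a _ ha
          simp only [decide_eq_true_eq] at *
          exact lt_of_lt_of_le ha hj
      _ ≤ k - 1 := sorted_countP_lt ls hsort _ hklen
      _ < k := by omega
  have sub2 : k ≤ (Finset.univ.filter (fun j : Fin N => v j ≤ x)).card := by
    rw [hc2]
    have h := sorted_countP_le ls hsort (k-1) hklen
    rw [← hx] at h
    omega
  refine le_trans sub2 (Finset.card_le_card ?_)
  intro j hj
  simp only [Finset.mem_filter, Finset.mem_univ, true_and] at *
  exact sub1 j hj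

theorem stmt3 {Ω : Type*} [MeasurableSpace Ω] (μ : Measure Ω) [IsProbabilityMeasure μ]
    (n T : ℕ) (hn : 0 < n) (hT : 0 < T) (α : ℝ) (hα : α ∈ Set.Ioo (0 : ℝ) 1)
    (Y : Ω → Fin (n + 1) → (Fin (T + 1) → ℝ)) (hYmeas : Measurable Y)
    -- exchangeability of the n+1 trajectories
    (hexch : ∀ σ : Equiv.Perm (Fin (n + 1)),
      Measure.map (fun ω i => Y ω (σ i)) μ = Measure.map Y μ)
    -- the online interval rule: lower and upper endpoints at each time t ∈ [T]
    (L U : (Fin (T + 1) → ℝ) → Fin T → ℝ)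
    (hLmeas : Measurable L) (hUmeas : Measurable U)
    -- strictly positive interval widths
    (hwidth : ∀ (y : Fin (T + 1) → ℝ) (t : Fin T), L y t < U y t)
    -- the interval at time t+1 depends only on the past values y_0, ..., y_t
    (hpast : ∀ (y y' : Fin (T + 1) → ℝ) (t : Fin T),
      (∀ s : Fin (T + 1), (s : ℕ) ≤ (t : ℕ) → y s = y' s) → L y t = L y' t ∧ U y t = U y' t) :
    ENNReal.ofReal (1 - α) ≤
      μ {ω | ∀ t : Fin T,
        (Y ω (Fin.last n) t.succ : EReal) ∈
          Set.Icc
            ((L (Y ω (Fin.last n)) t : EReal) -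
              kthSmallestE (List.ofFn (fun i : Fin n => mulScore hT L U (Y ω i.castSucc)))
                  ⌈(1 - α) * (n + 1)⌉₊ *
                ((U (Y ω (Fin.last n)) t - L (Y ω (Fin.last n)) t : ℝ) : EReal))
            ((U (Y ω (Fin.last n)) t : EReal) +
              kthSmallestE (List.ofFn (fun i : Fin n => mulScore hT L U (Y ω i.castSucc)))
                  ⌈(1 - α) * (n + 1)⌉₊ *
                ((U (Y ω (Fin.last n)) t - L (Y ω (Fin.last n)) t : ℝ) : EReal))} := by
  classical
  obtain ⟨hα0, hα1⟩ := hα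
  set k := ⌈(1 - α) * (n + 1)⌉₊ with hkdef
  have h1α : (0:ℝ) < 1 - α := by linarith
  have hk1 : 1 ≤ k := Nat.ceil_pos.mpr (by positivity)
  have hkn : k ≤ n + 1 := by
    rw [hkdef, Nat.ceil_le]
    push_cast
    nlinarith
  set sc := mulScore hT L U with hscdef
  have hscm : Measurable sc := mulScore_measurable hT L U hLmeas hUmeas
  set B : Fin (n+1) → Set (Fin (n+1) → Fin (T+1) → ℝ) := fun j =>
    {y | (Finset.univ.filter (fun i : Fin (n+1) => sc (y i) < sc (y j))).card < k} with hBdef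
  have hBmeas : ∀ j, MeasurableSet (B j) := by
    intro j
    have hcard : Measurable (fun y : Fin (n+1) → Fin (T+1) → ℝ =>
        ((Finset.univ.filter (fun i : Fin (n+1) => sc (y i) < sc (y j))).card : ℕ)) := by
      have : (fun y : Fin (n+1) → Fin (T+1) → ℝ =>
          ((Finset.univ.filter (fun i : Fin (n+1) => sc (y i) < sc (y j))).card : ℕ))
          = fun y => ∑ i : Fin (n+1), if sc (y i) < sc (y j) then 1 else 0 := by
        funext y
        rw [Finset.card_filter]
      rw [this]
      apply Finset.measurable_sum
      intro i _
      have h1 : Measurable fun y : Fin (n+1) → Fin (T+1) → ℝ => sc (y i) :=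
        hscm.comp (measurable_pi_apply i)
      have h2 : Measurable fun y : Fin (n+1) → Fin (T+1) → ℝ => sc (y j) :=
        hscm.comp (measurable_pi_apply j)
      exact Measurable.ite (measurableSet_lt h1 h2) measurable_const measurable_const
    exact hcard (measurableSet_Iio (a := k))
  have hmain : ∀ j, μ (Y ⁻¹' B j) = μ (Y ⁻¹' B (Fin.last n)) := by
    intro j
    set σ := Equiv.swap (Fin.last n) j with hσdef
    have hσY : Measurable (fun ω => fun i => Y ω (σ i)) :=
      measurable_pi_lambda _ (fun i => (measurable_pi_apply (σ i)).comp hYmeas)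
    have hset : Y ⁻¹' B j = (fun ω => fun i => Y ω (σ i)) ⁻¹' B (Fin.last n) := by
      ext ω
      simp only [Set.mem_preimage, hBdef, Set.mem_setOf_eq]
      have hlast : σ (Fin.last n) = j := Equiv.swap_apply_left _ _
      have hcards : (Finset.univ.filter
            (fun i : Fin (n+1) => sc (Y ω (σ i)) < sc (Y ω (σ (Fin.last n))))).card
          = (Finset.univ.filter (fun i : Fin (n+1) => sc (Y ω i) < sc (Y ω j))).card := by
        simp only [hlast]
        rw [Finset.card_filter, Finset.card_filter]
        exact Equiv.sum_comp σ (fun i => if sc (Y ω i) < sc (Y ω j) then 1 else 0)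
      rw [hcards]
    rw [hset, ← Measure.map_apply hσY (hBmeas _), hexch σ,
      Measure.map_apply hYmeas (hBmeas _)]
  have hcount : ∀ ω, (k : ENNReal) ≤
      ∑ j : Fin (n+1), (Y ⁻¹' B j).indicator (fun _ => (1:ENNReal)) ω := by
    intro ω
    have h := rank_comb hk1 hkn (fun j => sc (Y ω j))
    calc (k : ENNReal)
        ≤ ((Finset.univ.filter (fun j : Fin (n+1) =>
            (Finset.univ.filter (fun i : Fin (n+1) => sc (Y ω i) < sc (Y ω j))).card < k)).card
            : ℕ) := by exact_mod_cast h
      _ = ∑ j : Fin (n+1), (Y ⁻¹' B j).indicator (fun _ => (1:ENNReal)) ω := by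
          rw [Finset.card_filter, Nat.cast_sum]
          apply Finset.sum_congr rfl
          intro j _
          by_cases hc : (Finset.univ.filter
              (fun i : Fin (n+1) => sc (Y ω i) < sc (Y ω j))).card < k
          · simp [Set.indicator_apply, Set.mem_preimage, hBdef, hc]
          · simp [Set.indicator_apply, Set.mem_preimage, hBdef, hc]
  have hklow : (k : ENNReal) ≤ ((n+1 : ℕ) : ENNReal) * μ (Y ⁻¹' B (Fin.last n)) := by
    calc (k : ENNReal) = ∫⁻ _, (k : ENNReal) ∂μ := by simp
      _ ≤ ∫⁻ ω, ∑ j : Fin (n+1), (Y ⁻¹' B j).indicator (fun _ => (1:ENNReal)) ω ∂μ :=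
          lintegral_mono hcount
      _ = ∑ j : Fin (n+1), μ (Y ⁻¹' B j) := by
          rw [lintegral_finset_sum _ (fun j _ =>
            measurable_const.indicator (hYmeas (hBmeas j)))]
          apply Finset.sum_congr rfl
          intro j _
          rw [lintegral_indicator_const (hYmeas (hBmeas j)), one_mul]
      _ = ∑ _j : Fin (n+1), μ (Y ⁻¹' B (Fin.last n)) :=
          Finset.sum_congr rfl (fun j _ => hmain j)
      _ = ((n+1 : ℕ) : ENNReal) * μ (Y ⁻¹' B (Fin.last n)) := by
          rw [Finset.sum_const, Finset.card_univ, Fintype.card_fin, nsmul_eq_mul]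
  have hevent : {ω | ∀ t : Fin T,
        (Y ω (Fin.last n) t.succ : EReal) ∈
          Set.Icc
            ((L (Y ω (Fin.last n)) t : EReal) -
              kthSmallestE (List.ofFn (fun i : Fin n => mulScore hT L U (Y ω i.castSucc))) k *
                ((U (Y ω (Fin.last n)) t - L (Y ω (Fin.last n)) t : ℝ) : EReal))
            ((U (Y ω (Fin.last n)) t : EReal) +
              kthSmallestE (List.ofFn (fun i : Fin n => mulScore hT L U (Y ω i.castSucc))) k *
                ((U (Y ω (Fin.last n)) t - L (Y ω (Fin.last n)) t : ℝ) : EReal))}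
      = Y ⁻¹' B (Fin.last n) := by
    ext ω
    have hR : ω ∈ Y ⁻¹' B (Fin.last n) ↔
        ((sc (Y ω (Fin.last n)) : EReal) ≤
          kthSmallestE (List.ofFn (fun i : Fin n => sc (Y ω i.castSucc))) k) := by
      rw [kth_le_iff _ k hk1,
        countP_ofFn (fun i : Fin n => sc (Y ω i.castSucc))
          (fun a => a < sc (Y ω (Fin.last n)))]
      have hcards : (Finset.univ.filter
            (fun i : Fin (n+1) => sc (Y ω i) < sc (Y ω (Fin.last n)))).card
          = (Finset.univ.filter
            (fun i : Fin n => sc (Y ω i.castSucc) < sc (Y ω (Fin.last n)))).card := by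
        rw [Finset.card_filter, Finset.card_filter, Fin.sum_univ_castSucc]
        simp
      constructor
      · intro h
        exact lt_of_le_of_lt (le_of_eq (hcards.symm)) h
      · intro h
        exact lt_of_le_of_lt (le_of_eq hcards) h
    rw [Set.mem_setOf_eq, hR]
    rcases kth_mem (List.ofFn (fun i : Fin n => sc (Y ω i.castSucc))) k with htop | ⟨q, hqmem, hq⟩
    · rw [htop]
      simp only [le_top, iff_true]
      intro t
      have hw : (0:ℝ) < U (Y ω (Fin.last n)) t - L (Y ω (Fin.last n)) t := by
        linarith [hwidth (Y ω (Fin.last n)) t]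
      rw [EReal.top_mul_coe_of_pos hw]
      constructor
      · rw [show (L (Y ω (Fin.last n)) t : EReal) - ⊤ = ⊥ from rfl]
        exact bot_le
      · rw [show (U (Y ω (Fin.last n)) t : EReal) + ⊤ = ⊤ from EReal.coe_add_top _]
        exact le_top
    · rw [List.mem_ofFn] at hqmem
      obtain ⟨i, hi⟩ := hqmem
      have hq0 : 0 ≤ q := hi ▸ mulScore_nonneg hT L U _ (hwidth _)
      rw [hq, EReal.coe_le_coe_iff,
        mulScore_le_iff hT L U (Y ω (Fin.last n)) (hwidth _) q hq0]
      apply forall_congr'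
      intro t
      rw [show ((q : EReal) * ((U (Y ω (Fin.last n)) t - L (Y ω (Fin.last n)) t : ℝ) : EReal))
          = ((q * (U (Y ω (Fin.last n)) t - L (Y ω (Fin.last n)) t) : ℝ) : EReal) from
          (EReal.coe_mul _ _).symm,
        Set.mem_Icc,
        show ((L (Y ω (Fin.last n)) t : EReal) -
            ((q * (U (Y ω (Fin.last n)) t - L (Y ω (Fin.last n)) t) : ℝ) : EReal))
          = ((L (Y ω (Fin.last n)) t - q * (U (Y ω (Fin.last n)) t - L (Y ω (Fin.last n)) t)
              : ℝ) : EReal) from (EReal.coe_sub _ _).symm,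
        show ((U (Y ω (Fin.last n)) t : EReal) +
            ((q * (U (Y ω (Fin.last n)) t - L (Y ω (Fin.last n)) t) : ℝ) : EReal))
          = ((U (Y ω (Fin.last n)) t + q * (U (Y ω (Fin.last n)) t - L (Y ω (Fin.last n)) t)
              : ℝ) : EReal) from (EReal.coe_add _ _).symm,
        EReal.coe_le_coe_iff, EReal.coe_le_coe_iff]
  rw [hevent]
  have hdiv : (k : ENNReal) / ((n+1:ℕ) : ENNReal) ≤ μ (Y ⁻¹' B (Fin.last n)) :=
    ENNReal.div_le_of_le_mul (by rwa [mul_comm] at hklow)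
  refine le_trans ?_ hdiv
  rw [ENNReal.le_div_iff_mul_le (Or.inl (by exact_mod_cast Nat.succ_ne_zero n))
    (Or.inl (ENNReal.natCast_ne_top _))]
  rw [← ENNReal.ofReal_natCast (n+1), ← ENNReal.ofReal_mul h1α.le,
    ← ENNReal.ofReal_natCast k]
  apply ENNReal.ofReal_le_ofReal
  push_cast
  exact Nat.le_ceil _
end

section
/- (ACI average coverage bound.) Let α ∈ (0,1), γ > 0, and let err_t ∈ {0,1} for t = 1,2,.... Define α_{t+1} = α_t + γ(α - err_t) with initial value α_1 ∈ [0,1]. Suppose the rule satisfies: err_t = 1 whenever α_t < 0 and err_t = 0 whenever α_t > 1 (equivalently, assume α_t ∈ [-γ, 1+γ] for all t, which follows from the prediction rule's miscoverage structure). Then for every T ≥ 1, | (1/T) Σ_{t=1}^T err_t - α | ≤ (max(α_1, 1-α_1) + γ) / (T γ). -/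
/-!
Unrolling the update gives `α_{T+1} = α_1 + γ (T α - ∑_{t ≤ T} err_t)`, so the deviation of the
average miscoverage from `α` is exactly `(α_1 - α_{T+1}) / (T γ)`. Since `α_{T+1}` stays in
`[-γ, 1 + γ]`, the numerator is at most `max α_1 (1 - α_1) + γ` in absolute value.
-/

section ACI

variable {R : Type*} [Field R] (α γ : R) (a err : ℕ → R)

theorem aci_iterate_eq (hrec : ∀ t, 1 ≤ t → a (t + 1) = a t + γ * (α - err t)) (T : ℕ) :
    a (T + 1) = a 1 + γ * (T * α - ∑ t ∈ Finset.Icc 1 T, err t) := by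
  induction T with
  | zero => simp
  | succ n ih =>
    have hn : 1 ≤ n + 1 := Nat.le_add_left 1 n
    rw [hrec (n + 1) hn, ih, Finset.sum_Icc_succ_top hn]
    push_cast
    ring

theorem aci_average_sub_eq (hγ : γ ≠ 0)
    (hrec : ∀ t, 1 ≤ t → a (t + 1) = a t + γ * (α - err t)) {T : ℕ} (hT : (T : R) ≠ 0) :
    (∑ t ∈ Finset.Icc 1 T, err t) / T - α = (a 1 - a (T + 1)) / (T * γ) := by
  rw [aci_iterate_eq α γ a err hrec T]
  field_simp
  ring

end ACI

theorem abs_sub_le_max_add_of_mem_Icc {x y γ : ℝ} (hy : y ∈ Set.Icc (-γ) (1 + γ)) :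
    |x - y| ≤ max x (1 - x) + γ := by
  rw [abs_sub_le_iff]
  constructor
  · linarith [hy.1, le_max_left x (1 - x)]
  · linarith [hy.2, le_max_right x (1 - x)]

theorem stmt6_general (α γ : ℝ) (hγ : 0 < γ)
    (a : ℕ → ℝ) (err : ℕ → ℝ)
    (hrec : ∀ t, 1 ≤ t → a (t + 1) = a t + γ * (α - err t))
    (hbound : ∀ t, 1 ≤ t → a t ∈ Set.Icc (-γ) (1 + γ)) :
    ∀ T : ℕ, 1 ≤ T →
      |(∑ t ∈ Finset.Icc 1 T, err t) / T - α| ≤ (max (a 1) (1 - a 1) + γ) / (T * γ) := by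
  intro T hT
  have hTγ : (0 : ℝ) < T * γ := mul_pos (by exact_mod_cast hT) hγ
  rw [aci_average_sub_eq α γ a err hγ.ne' hrec (by positivity), abs_div, abs_of_pos hTγ]
  exact div_le_div_of_nonneg_right
    (abs_sub_le_max_add_of_mem_Icc (hbound (T + 1) (Nat.le_add_left 1 T))) hTγ.le

theorem stmt6 (α γ : ℝ) (hα : α ∈ Set.Ioo (0 : ℝ) 1) (hγ : 0 < γ)
    (a : ℕ → ℝ) (err : ℕ → ℝ)
    (herr : ∀ t, 1 ≤ t → err t = 0 ∨ err t = 1)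
    (ha1 : a 1 ∈ Set.Icc (0 : ℝ) 1)
    (hrec : ∀ t, 1 ≤ t → a (t + 1) = a t + γ * (α - err t))
    (hbound : ∀ t, 1 ≤ t → a t ∈ Set.Icc (-γ) (1 + γ)) :
    ∀ T : ℕ, 1 ≤ T →
      |(∑ t ∈ Finset.Icc 1 T, err t) / T - α| ≤ (max (a 1) (1 - a 1) + γ) / (T * γ) :=
  stmt6_general α γ hγ a err hrec hbound
end

section
/- (ACI asymptotic coverage.) Under the assumptions of the ACI average coverage bound (α_t stays in [-γ, 1+γ] for all t under the update α_{t+1} = α_t + γ(α - err_t) with err_t ∈ {0,1}), the limit lim_{T→∞} (1/T) Σ_{t=1}^T err_t exists and equals α. -/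
open Filter

theorem stmt7 (α γ : ℝ) (hα : α ∈ Set.Ioo (0 : ℝ) 1) (hγ : 0 < γ)
    (a : ℕ → ℝ) (err : ℕ → ℝ)
    (herr : ∀ t, 1 ≤ t → err t = 0 ∨ err t = 1)
    (ha1 : a 1 ∈ Set.Icc (0 : ℝ) 1)
    (hrec : ∀ t, 1 ≤ t → a (t + 1) = a t + γ * (α - err t))
    (hbound : ∀ t, 1 ≤ t → a t ∈ Set.Icc (-γ) (1 + γ)) :
    Tendsto (fun T : ℕ => (∑ t ∈ Finset.Icc 1 T, err t) / T) atTop (nhds α) := by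
  have hsum : ∀ T : ℕ, (∑ t ∈ Finset.Icc 1 T, err t) = T * α + (a 1 - a (T + 1)) / γ := by
    intro T
    induction T with
    | zero => simp
    | succ T ih =>
      rw [Finset.sum_Icc_succ_top (by omega : 1 ≤ T + 1), ih,
        hrec (T + 1) (by omega)]
      push_cast
      field_simp
      ring
  have h0 : Tendsto (fun T : ℕ => (a 1 - a (T + 1)) / γ / T) atTop (nhds 0) := by
    apply squeeze_zero_norm (a := fun T : ℕ => (1 + γ) / γ / T)
    · intro T
      rcases Nat.eq_zero_or_pos T with h | h
      · simp [h]
      · rw [norm_div, norm_div, Real.norm_natCast, Real.norm_eq_abs γ, abs_of_pos hγ]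
        gcongr
        have hb := hbound (T + 1) (by omega)
        rw [Real.norm_eq_abs, abs_le]
        exact ⟨by nlinarith [ha1.1, ha1.2, hb.1, hb.2], by nlinarith [ha1.1, ha1.2, hb.1, hb.2]⟩
    · exact Tendsto.div_atTop tendsto_const_nhds tendsto_natCast_atTop_atTop
  have : Tendsto (fun T : ℕ => α + (a 1 - a (T + 1)) / γ / T) atTop (nhds (α + 0)) :=
    tendsto_const_nhds.add h0
  rw [add_zero] at this
  apply this.congr'
  filter_upwards [eventually_ge_atTop 1] with T hT
  rw [hsum T]
  have hT' : (T : ℝ) ≠ 0 := Nat.cast_ne_zero.mpr (by omega)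
  field_simp
end

section
/- (Boundedness of the ACI iterates.) Let α ∈ (0,1), γ > 0, α_1 ∈ [0,1], and let err_t ∈ {0,1} satisfy: err_t = 0 whenever α_t ≤ 0, and err_t = 1 whenever α_t ≥ 1. Then the recursion α_{t+1} = α_t + γ(α - err_t) satisfies α_t ∈ [-γ, 1+γ] for all t ≥ 1. -/
/-! A step moves the iterate by at most `γ`, and once it has left `(0, 1)` the step points back
towards `[0, 1]`: from `x ≤ 0` it can only go up, to at most `γ`, and from `x ≥ 1` only down, to
at least `1 - γ`. Hence `[-γ, 1 + γ]` is invariant. -/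

open Set

theorem aci_step_mem_Icc {α γ x e : ℝ} (hα : α ∈ Icc (0 : ℝ) 1) (hγ : 0 ≤ γ)
    (he : e ∈ Icc (0 : ℝ) 1) (he0 : x ≤ 0 → e = 0) (he1 : 1 ≤ x → e = 1)
    (hx : x ∈ Icc (-γ) (1 + γ)) : x + γ * (α - e) ∈ Icc (-γ) (1 + γ) := by
  have hγα : 0 ≤ γ * α ∧ γ * α ≤ γ :=
    ⟨mul_nonneg hγ hα.1, mul_le_of_le_one_right hγ hα.2⟩
  have hγe : 0 ≤ γ * e ∧ γ * e ≤ γ :=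
    ⟨mul_nonneg hγ he.1, mul_le_of_le_one_right hγ he.2⟩
  rw [mul_sub]
  rcases le_or_gt x 0 with hx0 | hx0
  · rw [he0 hx0, mul_zero]
    constructor <;> linarith [hx.1]
  rcases le_or_gt 1 x with hx1 | hx1
  · rw [he1 hx1, mul_one]
    constructor <;> linarith [hx.2]
  constructor <;> linarith

theorem stmt8 (α γ : ℝ) (hα : α ∈ Set.Ioo (0 : ℝ) 1) (hγ : 0 < γ)
    (a : ℕ → ℝ) (err : ℕ → ℝ)
    (herr : ∀ t, 1 ≤ t → err t = 0 ∨ err t = 1)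
    (ha1 : a 1 ∈ Set.Icc (0 : ℝ) 1)
    (herr0 : ∀ t, 1 ≤ t → a t ≤ 0 → err t = 0)
    (herr1 : ∀ t, 1 ≤ t → 1 ≤ a t → err t = 1)
    (hrec : ∀ t, 1 ≤ t → a (t + 1) = a t + γ * (α - err t)) :
    ∀ t, 1 ≤ t → a t ∈ Set.Icc (-γ) (1 + γ) := by
  intro t ht
  induction t, ht using Nat.le_induction with
  | base => exact Icc_subset_Icc (by linarith) (by linarith) ha1
  | succ n hn ih =>
    have herr_mem : err n ∈ Icc (0 : ℝ) 1 := by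
      rcases herr n hn with h | h <;> simp [h]
    rw [hrec n hn]
    exact aci_step_mem_Icc (Ioo_subset_Icc_self hα) hγ.le herr_mem (herr0 n hn) (herr1 n hn) ih
end

section
/- (DKW-based coverage under selection.) Let F̂_n be the empirical CDF of n i.i.d. samples ε_1,...,ε_n from a distribution with CDF F. For each of L fixed nondecreasing score transformations, suppose the quantile Q̂ is chosen as the ⌈(1-α)(n+1)⌉/n empirical quantile. Using the Dvoretzky–Kiefer–Wolfowitz inequality P(sup_x |F̂_n(x) - F(x)| > u) ≤ 2e^{-2nu²} and a union bound over L transformations, show: with probability at least 1 - 2L e^{-2nu²}, for every one of the L candidates, F(Q̂) ≥ (1+1/n)(1-α) - 1/n - u. In particular, a test point independent of the sample is covered by the selected candidate's threshold with probability at least (1+1/n)(1-α) - 1/n - u - 2L e^{-2nu²}. -/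
open MeasureTheory

theorem stmt12 {Ω : Type*} [MeasurableSpace Ω] (μ : Measure Ω) [IsProbabilityMeasure μ]
    (n L : ℕ) (hn : 0 < n) (hL : 1 ≤ L) (α u : ℝ) (hα : α ∈ Set.Ioo (0 : ℝ) 1) (hu : 0 < u)
    -- true CDF of the scores under each of the L candidate transformations
    (F : Fin L → ℝ → ℝ) (hFmeas : ∀ j, Measurable (F j))
    (hFmono : ∀ j, Monotone (F j)) (hF01 : ∀ j x, F j x ∈ Set.Icc (0 : ℝ) 1)
    -- empirical CDF of the n calibration scores under each candidate transformation
    (Fhat : Fin L → Ω → ℝ → ℝ)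
    -- the selected empirical quantile threshold for each candidate
    (Qhat : Fin L → Ω → ℝ) (hQmeas : ∀ j, Measurable (Qhat j))
    -- DKW inequality for each candidate
    (hDKW : ∀ j, μ {ω | ¬ ∀ x, |Fhat j ω x - F j x| ≤ u} ≤
      ENNReal.ofReal (2 * Real.exp (-2 * n * u ^ 2)))
    -- the empirical CDF at the ⌈(1-α)(n+1)⌉-th order statistic is at least ⌈(1-α)(n+1)⌉/n
    (hquant : ∀ j ω, (⌈(1 - α) * (n + 1)⌉₊ : ℝ) / n ≤ Fhat j ω (Qhat j ω))
    -- an arbitrary data-dependent selection among the L candidates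
    (J : Ω → Fin L) (hJ : Measurable J) :
    ENNReal.ofReal (1 - 2 * L * Real.exp (-2 * n * u ^ 2)) ≤
        μ {ω | ∀ j, (1 + 1 / n) * (1 - α) - 1 / n - u ≤ F j (Qhat j ω)} ∧
      (1 + 1 / n) * (1 - α) - 1 / n - u - 2 * L * Real.exp (-2 * n * u ^ 2) ≤
        ∫ ω, F (J ω) (Qhat (J ω) ω) ∂μ := by
  have hn' : (0:ℝ) < n := by exact_mod_cast hn
  set c : ℝ := (1 + 1 / n) * (1 - α) - 1 / n - u with hc
  set e : ℝ := 2 * L * Real.exp (-2 * n * u ^ 2) with he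
  have he0 : 0 ≤ e := by positivity
  have hc1 : c < 1 := by
    rw [hc]
    have hα0 := hα.1
    have h1n : 0 < 1 / (n:ℝ) := by positivity
    nlinarith [mul_pos hα0 h1n]
  set A : Set Ω := {ω | ∀ j, c ≤ F j (Qhat j ω)} with hA
  -- deterministic implication
  have key : ∀ j ω, (∀ x, |Fhat j ω x - F j x| ≤ u) → c ≤ F j (Qhat j ω) := by
    intro j ω h
    have h1 := h (Qhat j ω)
    have h2 := hquant j ω
    have h3 : (1 - α) * (n + 1) ≤ (⌈(1 - α) * (n + 1)⌉₊ : ℝ) := Nat.le_ceil _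
    have h4 : (1 - α) * (n + 1) / n ≤ (⌈(1 - α) * (n + 1)⌉₊ : ℝ) / n := by gcongr
    have h5 : (1 - α) * (n + 1) / n = (1 + 1 / n) * (1 - α) := by field_simp
    have habs : Fhat j ω (Qhat j ω) - u ≤ F j (Qhat j ω) := by
      have := abs_le.mp h1
      linarith [this.1, this.2]
    have h1n : 0 < 1 / (n:ℝ) := by positivity
    rw [hc]
    linarith
  -- A measurable
  have hAmeas : MeasurableSet A := by
    rw [hA, Set.setOf_forall]
    apply MeasurableSet.iInter
    intro j
    exact measurableSet_le measurable_const ((hFmeas j).comp (hQmeas j))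
  -- complement bound
  have hcompl : Aᶜ ⊆ ⋃ j, {ω | ¬ ∀ x, |Fhat j ω x - F j x| ≤ u} := by
    intro ω hω
    simp only [hA, Set.mem_compl_iff, Set.mem_setOf_eq, not_forall] at hω
    obtain ⟨j, hj⟩ := hω
    refine Set.mem_iUnion.mpr ⟨j, ?_⟩
    simp only [Set.mem_setOf_eq]
    intro hall
    exact hj (key j ω hall)
  have hμcompl : μ Aᶜ ≤ ENNReal.ofReal e := by
    calc μ Aᶜ ≤ ∑' j : Fin L, μ {ω | ¬ ∀ x, |Fhat j ω x - F j x| ≤ u} :=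
          le_trans (measure_mono hcompl) (measure_iUnion_le _)
      _ ≤ ∑' (_ : Fin L), ENNReal.ofReal (2 * Real.exp (-2 * n * u ^ 2)) :=
          ENNReal.tsum_le_tsum (fun j => hDKW j)
      _ = (L : ENNReal) * ENNReal.ofReal (2 * Real.exp (-2 * n * u ^ 2)) := by
          rw [tsum_fintype]
          simp [Finset.sum_const, Finset.card_univ, nsmul_eq_mul]
      _ = ENNReal.ofReal e := by
          rw [he, ← ENNReal.ofReal_natCast L, ← ENNReal.ofReal_mul (by positivity)]
          congr 1
          ring
  have hμA : ENNReal.ofReal (1 - e) ≤ μ A := by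
    have h1 : (1 : ENNReal) ≤ μ A + μ Aᶜ := by
      have := measure_union_le (μ := μ) A Aᶜ
      rw [Set.union_compl_self, measure_univ] at this
      exact this
    rw [ENNReal.ofReal_sub _ he0, ENNReal.ofReal_one]
    refine tsub_le_iff_right.mpr ?_
    calc (1 : ENNReal) ≤ μ A + μ Aᶜ := h1
      _ ≤ μ A + ENNReal.ofReal e := by gcongr
  constructor
  · exact hμA
  · -- integral bound
    have hg0 : ∀ ω, 0 ≤ F (J ω) (Qhat (J ω) ω) := fun ω => (hF01 _ _).1
    by_cases hce : c - e ≤ 0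
    · exact le_trans hce (integral_nonneg hg0)
    push_neg at hce
    have hc0 : 0 < c := by linarith
    have he1 : e < 1 := by linarith
    -- measurability of g
    have hgmeas : Measurable fun ω => F (J ω) (Qhat (J ω) ω) := by
      have : (fun ω => F (J ω) (Qhat (J ω) ω))
          = fun ω => ∑ j : Fin L, if J ω = j then F j (Qhat j ω) else 0 := by
        funext ω
        rw [Finset.sum_ite_eq Finset.univ (J ω) (fun j => F j (Qhat j ω))]
        simp
      rw [this]
      apply Finset.measurable_sum
      intro j _
      exact Measurable.ite (hJ (measurableSet_singleton j))
        ((hFmeas j).comp (hQmeas j)) measurable_const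
    have hgint : Integrable (fun ω => F (J ω) (Qhat (J ω) ω)) μ := by
      refine (integrable_const (1:ℝ)).mono' hgmeas.aestronglyMeasurable ?_
      filter_upwards with ω
      rw [Real.norm_eq_abs, abs_of_nonneg (hg0 ω)]
      exact (hF01 _ _).2
    have hind : Integrable (A.indicator fun _ => c) μ :=
      (integrable_const c).indicator hAmeas
    have hle : ∀ ω, A.indicator (fun _ => c) ω ≤ F (J ω) (Qhat (J ω) ω) := by
      intro ω
      by_cases hω : ω ∈ A
      · rw [Set.indicator_of_mem hω]
        exact hω (J ω)
      · rw [Set.indicator_of_notMem hω]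
        exact hg0 ω
    have hint1 : ∫ ω, A.indicator (fun _ => c) ω ∂μ ≤ ∫ ω, F (J ω) (Qhat (J ω) ω) ∂μ :=
      integral_mono hind hgint hle
    have hind_val : ∫ ω, A.indicator (fun _ => c) ω ∂μ = c * (μ A).toReal := by
      rw [integral_indicator_const _ hAmeas]
      simp [smul_eq_mul, mul_comm, Measure.real]
    have hμAreal : 1 - e ≤ (μ A).toReal := by
      have hAfin : μ A ≠ ⊤ := measure_ne_top μ A
      have := ENNReal.toReal_mono hAfin hμA
      rwa [ENNReal.toReal_ofReal (by linarith)] at this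
    have : c - e ≤ c * (μ A).toReal := by
      have : c * (1 - e) ≤ c * (μ A).toReal :=
        mul_le_mul_of_nonneg_left hμAreal (le_of_lt hc0)
      nlinarith
    rw [hind_val] at hint1
    linarith
end
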